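/- Let f be a continuous real-valued function on an open interval I ⊆ ℝ, and let X be a random variable on a probability space (Ω, Σ, μ) whose range is contained in I, such that E(X) and E(f(X)) exist and are finite. If E(X) is a point of convexity of f relative to I (meaning f(E(X)) ≤ ∫ f dν for every Borel probability measure ν on I with barycenter E(X) for which f is ν-integrable, or equivalently for every finite convex combination of points of I equal to E(X), extended by continuity), then f(E(X)) ≤ E(f(X)) = ∫_Ω f(X(ω)) dμ(ω). -/

import Mathlib

open MeasureTheory Set

/-!
A point of convexity `a` of `f` makes every chord slope of `f` ending at `a` from the left at most
every chord slope starting at `a` to the right: this is the hypothesis applied to a two-point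
convex combination. When `a` is an interior point, the supremum `c` of the left slopes therefore
gives a supporting line `x ↦ f a + c (x - a)` below `f` on `I`. Taking `a = E X`, which lies in the
interval `I` since `X` takes values both `≤ E X` and `≥ E X`, and integrating
`f a + c (X - a) ≤ f X` yields `f (E X) ≤ E (f X)`.
-/

def IsPointOfConvexity (I : Set ℝ) (f : ℝ → ℝ) (a : ℝ) : Prop :=
  ∀ (n : ℕ) (z w : Fin n → ℝ), (∀ k, z k ∈ I) → (∀ k, 0 < w k) → ∑ k, w k = 1 →
    ∑ k, w k * z k = a → f a ≤ ∑ k, w k * f (z k)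

theorem MeasureTheory.integral_mem_of_ordConnected {Ω : Type*} [MeasurableSpace Ω] {μ : Measure Ω}
    [IsProbabilityMeasure μ] {s : Set ℝ} (hs : s.OrdConnected) {X : Ω → ℝ} (hX : ∀ ω, X ω ∈ s)
    (hXi : Integrable X μ) : ∫ ω, X ω ∂μ ∈ s := by
  obtain ⟨ω₁, h₁⟩ := exists_le_integral hXi
  obtain ⟨ω₂, h₂⟩ := exists_integral_le hXi
  exact hs.out (hX ω₁) (hX ω₂) ⟨h₁, h₂⟩

theorem IsPointOfConvexity.slope_le {I : Set ℝ} {f : ℝ → ℝ} {a x y : ℝ}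
    (h : IsPointOfConvexity I f a) (hx : x ∈ I) (hy : y ∈ I) (hxa : x < a) (hay : a < y) :
    slope f x a ≤ slope f a y := by
  have hyx : 0 < y - x := by linarith
  have hcomb := h 2 ![x, y] ![(y - a) / (y - x), (a - x) / (y - x)]
    (by simp [Fin.forall_fin_two, hx, hy])
    (by
      simp only [Fin.forall_fin_two, Matrix.cons_val_zero, Matrix.cons_val_one]
      exact ⟨div_pos (by linarith) hyx, div_pos (by linarith) hyx⟩)
    (by simp only [Fin.sum_univ_two, Matrix.cons_val_zero, Matrix.cons_val_one]; field_simp; ring)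
    (by simp only [Fin.sum_univ_two, Matrix.cons_val_zero, Matrix.cons_val_one]; field_simp; ring)
  simp only [Fin.sum_univ_two, Matrix.cons_val_zero, Matrix.cons_val_one] at hcomb
  have hcleared : f a * (y - x) ≤ (y - a) * f x + (a - x) * f y :=
    calc f a * (y - x) ≤ ((y - a) / (y - x) * f x + (a - x) / (y - x) * f y) * (y - x) := by
          gcongr
      _ = (y - a) * f x + (a - x) * f y := by field_simp
  rw [slope_def_field, slope_def_field, div_le_div_iff₀ (by linarith) (by linarith)]
  linarith

theorem exists_supporting_line_of_slope_le {I : Set ℝ} {f : ℝ → ℝ} {a : ℝ} (ha : a ∈ interior I)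
    (hslope : ∀ x ∈ I, ∀ y ∈ I, x < a → a < y → slope f x a ≤ slope f a y) :
    ∃ c, ∀ x ∈ I, f a + c * (x - a) ≤ f x := by
  have hI : ∀ᶠ x in nhds a, x ∈ I := mem_interior_iff_mem_nhds.1 ha
  obtain ⟨x₀, hx₀a, hx₀⟩ := hI.exists_lt
  obtain ⟨y₀, hay₀, hy₀⟩ := hI.exists_gt
  set L := (slope f · a) '' (I ∩ Iio a)
  have hL : BddAbove L := ⟨slope f a y₀, by
    rintro _ ⟨x, ⟨hx, hxa⟩, rfl⟩
    exact hslope x hx y₀ hy₀ hxa hay₀⟩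
  refine ⟨sSup L, fun x hx => ?_⟩
  rcases lt_trichotomy x a with hxa | rfl | hax
  · have hle : slope f x a ≤ sSup L := le_csSup hL ⟨x, ⟨hx, hxa⟩, rfl⟩
    rw [slope_def_field, div_le_iff₀ (by linarith)] at hle
    linarith
  · simp
  · have hle : sSup L ≤ slope f a x := csSup_le ⟨_, x₀, ⟨hx₀, hx₀a⟩, rfl⟩ <| by
      rintro _ ⟨u, ⟨hu, hua⟩, rfl⟩
      exact hslope u hu x hx hua hax
    rw [slope_def_field, le_div_iff₀ (by linarith)] at hle
    linarith

theorem jensen_at_point_of_convexity_general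
    (I : Set ℝ) (hIopen : IsOpen I) (hIconv : Convex ℝ I)
    (f : ℝ → ℝ)
    {Ω : Type*} [MeasurableSpace Ω] (μ : Measure Ω) [IsProbabilityMeasure μ]
    (X : Ω → ℝ)
    (hrange : ∀ ω, X ω ∈ I)
    (hXint : Integrable X μ)
    (hfXint : Integrable (fun ω => f (X ω)) μ)
    (hconv : ∀ (n : ℕ) (z : Fin n → ℝ) (w : Fin n → ℝ),
      (∀ k, z k ∈ I) → (∀ k, 0 < w k) → (∑ k, w k = 1) →
      (∑ k, w k * z k = ∫ ω, X ω ∂μ) →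
      f (∫ ω, X ω ∂μ) ≤ ∑ k, w k * f (z k)) :
    f (∫ ω, X ω ∂μ) ≤ ∫ ω, f (X ω) ∂μ := by
  have hpoint : IsPointOfConvexity I f (∫ ω, X ω ∂μ) := hconv
  set a := ∫ ω, X ω ∂μ with ha
  have haI : a ∈ interior I := by
    rw [hIopen.interior_eq]
    exact integral_mem_of_ordConnected hIconv.ordConnected hrange hXint
  obtain ⟨c, hc⟩ := exists_supporting_line_of_slope_le haI
    fun _ hx _ hy => hpoint.slope_le hx hy
  have hdev : Integrable (fun ω => c * (X ω - a)) μ :=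
    (hXint.sub (integrable_const a)).const_mul c
  calc f a = ∫ ω, f a + c * (X ω - a) ∂μ := by
        rw [integral_add (integrable_const _) hdev, integral_const_mul,
          integral_sub hXint (integrable_const a)]
        simp [← ha]
    _ ≤ ∫ ω, f (X ω) ∂μ :=
        integral_mono ((integrable_const _).add hdev) hfXint fun ω => hc (X ω) (hrange ω)

theorem jensen_at_point_of_convexity
    (I : Set ℝ) (hIopen : IsOpen I) (hIconv : Convex ℝ I)
    (f : ℝ → ℝ) (hf : ContinuousOn f I)
    {Ω : Type*} [MeasurableSpace Ω] (μ : Measure Ω) [IsProbabilityMeasure μ]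
    (X : Ω → ℝ) (hXm : Measurable X)
    (hrange : ∀ ω, X ω ∈ I)
    (hXint : Integrable X μ)
    (hfXint : Integrable (fun ω => f (X ω)) μ)
    (hconv : ∀ (n : ℕ) (z : Fin n → ℝ) (w : Fin n → ℝ),
      (∀ k, z k ∈ I) → (∀ k, 0 < w k) → (∑ k, w k = 1) →
      (∑ k, w k * z k = ∫ ω, X ω ∂μ) →
      f (∫ ω, X ω ∂μ) ≤ ∑ k, w k * f (z k)) :
    f (∫ ω, X ω ∂μ) ≤ ∫ ω, f (X ω) ∂μ :=
  jensen_at_point_of_convexity_general I hIopen hIconv f μ X hrange hXint hfXint hconv
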